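/- Let (T,c) be an algebraic tree and ν a measure on the Borel σ-algebra of the component topology with ν([x,y]) < ∞ for all x,y. Define r_ν(x,y) := ν([x,y]) − ½ν({x}) − ½ν({y}). Then r_ν is a pseudometric on T; in particular r_ν(x,y) + r_ν(y,z) = r_ν(x,z) + 2 r_ν(c(x,y,z), y) for all x,y,z ∈ T. -/

import Mathlib

/-!
Three set identities drive the proof: `[x,y] ∩ [y,z] = [c x y z, y]`,
`[x,y] ∪ [y,z] = [x,z] ∪ [c x y z, y]` and `[x,z] ∩ [c x y z, y] = {c x y z}`. They follow from
convexity of intervals (`u, v ∈ [x,y] → [u,v] ⊆ [x,y]`), the covering `[x,z] ⊆ [x,y] ∪ [y,z]`,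
and the fact that the three intervals spanned by `x, y, z` meet only in `c x y z`.
Inclusion–exclusion for the pairs `[x,y], [y,z]` and `[x,z], [c x y z, y]` then gives the
four-point identity for `r_ν`, and the triangle inequality is that identity together with
`r_ν ≥ 0`. Intervals are measurable because they are closed: a point `w ∉ [x,y]` is separated
from `[x,y]` by the component of `w` at its projection `c x y w`.
-/

variable {T : Type*}

/-- An algebraic tree: a symmetric branch point map satisfying the
2-point, 3-point and 4-point conditions (BPM1)–(BPM4). -/
def IsAlgTree (c : T → T → T → T) : Prop :=
  (∀ x y z, c x y z = c y x z) ∧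
  (∀ x y z, c x y z = c x z y) ∧
  (∀ x y, c x y y = y) ∧
  (∀ x y z, c x y (c x y z) = c x y z) ∧
  (∀ x₁ x₂ x₃ x₄, c x₁ x₂ x₃ = c x₁ x₂ x₄ ∨ c x₁ x₂ x₃ = c x₁ x₃ x₄ ∨
    c x₁ x₂ x₃ = c x₂ x₃ x₄)

/-- The interval `[x,y] = {w : c(x,y,w) = w}`. -/
def interval (c : T → T → T → T) (x y : T) : Set T := {w | c x y w = w}

/-- The component `S_x(y)` of `T \ {x}` containing `y`. -/
def component (c : T → T → T → T) (x y : T) : Set T := {z | z ≠ x ∧ c x y z ≠ x}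

/-- The component topology, generated by the components `S_x(y)`, `x ≠ y`. -/
def componentTopology (c : T → T → T → T) : TopologicalSpace T :=
  TopologicalSpace.generateFrom {S | ∃ x y, x ≠ y ∧ S = component c x y}

open MeasureTheory Set Topology
open scoped ENNReal

theorem mem_interval {c : T → T → T → T} {x y w : T} : w ∈ interval c x y ↔ c x y w = w :=
  Iff.rfl

namespace IsAlgTree

variable {c : T → T → T → T} (hc : IsAlgTree c) {x y z u w : T}
include hc

theorem swap₁₂ (x y z : T) : c x y z = c y x z := hc.1 x y z

theorem swap₂₃ (x y z : T) : c x y z = c x z y := hc.2.1 x y z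

theorem swap₁₃ (x y z : T) : c x y z = c z y x := by
  rw [hc.swap₂₃, hc.swap₁₂, hc.swap₂₃]

theorem rotate (x y z : T) : c x y z = c y z x := by
  rw [hc.swap₁₂, hc.swap₂₃]

theorem branch_right (x y : T) : c x y y = y := hc.2.2.1 x y

theorem branch_left (x y : T) : c x x y = x := by
  rw [hc.swap₂₃, hc.swap₁₂, hc.branch_right]

theorem four_point (x₁ x₂ x₃ x₄ : T) :
    c x₁ x₂ x₃ = c x₁ x₂ x₄ ∨ c x₁ x₂ x₃ = c x₁ x₃ x₄ ∨ c x₁ x₂ x₃ = c x₂ x₃ x₄ :=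
  hc.2.2.2.2 x₁ x₂ x₃ x₄

theorem branch_mem_interval₁₂ (x y z : T) : c x y z ∈ interval c x y := hc.2.2.2.1 x y z

theorem branch_mem_interval₁₃ (x y z : T) : c x y z ∈ interval c x z := by
  rw [hc.swap₂₃]; exact hc.branch_mem_interval₁₂ x z y

theorem branch_mem_interval₂₃ (x y z : T) : c x y z ∈ interval c y z := by
  rw [hc.rotate]; exact hc.branch_mem_interval₁₂ y z x

theorem left_mem_interval (x y : T) : x ∈ interval c x y := by
  rw [mem_interval, hc.swap₁₂, hc.branch_right]

theorem right_mem_interval (x y : T) : y ∈ interval c x y := hc.branch_right x y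

theorem interval_comm (x y : T) : interval c x y = interval c y x := by
  ext w
  rw [mem_interval, mem_interval, hc.swap₁₂]

theorem interval_self (x : T) : interval c x x = {x} := by
  ext w
  rw [mem_interval, hc.branch_left, mem_singleton_iff, eq_comm]

theorem eq_branch_of_mem_interval (hxy : w ∈ interval c x y) (hyz : w ∈ interval c y z)
    (hxz : w ∈ interval c x z) : w = c x y z := by
  rcases hc.four_point x y z w with h | h | h
  · rw [h, hxy]
  · rw [h, hxz]
  · rw [h, hyz]

theorem interval_subset_union (x y z : T) :
    interval c x z ⊆ interval c x y ∪ interval c y z := by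
  intro w hw
  rcases hc.four_point x z w y with h | h | h
  · left
    rw [hw, hc.swap₂₃ x z y] at h
    exact h ▸ hc.branch_mem_interval₁₂ x y z
  · left
    rwa [mem_interval, hc.swap₂₃, ← h]
  · right
    rwa [mem_interval, hc.swap₁₂ y z w, hc.swap₂₃ z y w, ← h]

theorem interval_subset_of_mem (hu : u ∈ interval c x y) :
    interval c u y ⊆ interval c x y := by
  intro w hw
  rw [mem_interval] at hu hw ⊢
  rcases hc.four_point x y w u with h | h | h
  · have hxyw : c x y w = u := h.trans hu
    have hwu : w = u :=
      hw.symm.trans ((hc.rotate u y w).trans (hxyw ▸ hc.branch_mem_interval₂₃ x y w))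
    rw [hxyw, hwu]
  · rcases hc.four_point u y w x with h' | h' | h'
    · have hwu : w = u := by rw [← hw, h', hc.swap₁₃, hu]
      rwa [hwu]
    · rw [h, hc.swap₁₃, ← h', hw]
    · rw [hc.rotate x y w, ← h', hw]
  · rw [h, ← hc.rotate u y w, hw]

theorem interval_subset {v : T} (hu : u ∈ interval c x y) (hv : v ∈ interval c x y) :
    interval c u v ⊆ interval c x y := by
  have hvx : interval c v x ⊆ interval c x y := by
    rw [hc.interval_comm x y] at hv ⊢
    exact hc.interval_subset_of_mem hv
  rcases hc.interval_subset_union x v y hu with hu | hu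
  · exact (hc.interval_subset_of_mem hu).trans (hc.interval_comm x v ▸ hvx)
  · rw [hc.interval_comm v y] at hu
    exact (hc.interval_subset_of_mem hu).trans
      (hc.interval_comm v y ▸ hc.interval_subset_of_mem hv)

theorem interval_inter_interval (x y z : T) :
    interval c x y ∩ interval c y z = interval c (c x y z) y := by
  have hxz : interval c x (c x y z) ⊆ interval c x z :=
    hc.interval_subset (hc.left_mem_interval x z) (hc.branch_mem_interval₁₃ x y z)
  refine Subset.antisymm (fun w ⟨hxy, hyz⟩ => ?_) (subset_inter ?_ ?_)
  · rcases hc.interval_subset_union x (c x y z) y hxy with h | h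
    · rw [hc.eq_branch_of_mem_interval hxy hyz (hxz h)]
      exact hc.left_mem_interval _ y
    · exact h
  · exact hc.interval_subset (hc.branch_mem_interval₁₂ x y z) (hc.right_mem_interval x y)
  · exact hc.interval_subset (hc.branch_mem_interval₂₃ x y z) (hc.left_mem_interval y z)

theorem interval_union_interval (x y z : T) :
    interval c x y ∪ interval c y z = interval c x z ∪ interval c (c x y z) y := by
  refine Subset.antisymm (union_subset ?_ ?_) (union_subset (hc.interval_subset_union x y z) ?_)
  · refine (hc.interval_subset_union x (c x y z) y).trans (union_subset_union_left _ ?_)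
    exact hc.interval_subset (hc.left_mem_interval x z) (hc.branch_mem_interval₁₃ x y z)
  · rw [hc.interval_comm y z, hc.interval_comm x z]
    refine (hc.interval_subset_union z (c x y z) y).trans (union_subset_union_left _ ?_)
    exact hc.interval_subset (hc.left_mem_interval z x)
      (hc.interval_comm x z ▸ hc.branch_mem_interval₁₃ x y z)
  · rw [← hc.interval_inter_interval]
    exact inter_subset_left.trans subset_union_left

theorem interval_inter_branch_interval (x y z : T) :
    interval c x z ∩ interval c (c x y z) y = {c x y z} := by
  refine Subset.antisymm (fun w ⟨hxz, hvy⟩ => ?_) ?_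
  · rw [← hc.interval_inter_interval] at hvy
    exact hc.eq_branch_of_mem_interval hvy.1 hvy.2 hxz
  · rw [singleton_subset_iff]
    exact ⟨hc.branch_mem_interval₁₃ x y z, hc.left_mem_interval _ y⟩

theorem branch_mem_interval_of_mem (hz : z ∈ interval c x y) (w : T) :
    c x y w ∈ interval c w z := by
  rcases hc.four_point x y w z with h | h | h
  · rw [mem_interval, h, hz, hc.branch_right]
  · rw [h, hc.rotate x w z]
    exact hc.branch_mem_interval₁₂ w z x
  · rw [h, hc.rotate y w z]
    exact hc.branch_mem_interval₁₂ w z y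

theorem isClosed_interval (x y : T) : IsClosed[componentTopology c] (interval c x y) := by
  let := componentTopology c
  rw [← isOpen_compl_iff, isOpen_iff_forall_mem_open]
  intro w hw
  have hne : c x y w ≠ w := hw
  refine ⟨component c (c x y w) w, fun z ⟨_, hz⟩ hzI => hz ?_,
    TopologicalSpace.isOpen_generateFrom_of_mem ⟨_, w, hne, rfl⟩, hne.symm, ?_⟩
  · rw [hc.rotate]
    exact hc.branch_mem_interval_of_mem hzI w
  · rw [hc.branch_right]
    exact hne.symm

theorem measurableSet_interval (x y : T) :
    MeasurableSet[@borel T (componentTopology c)] (interval c x y) := by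
  let := componentTopology c
  let : MeasurableSpace T := borel T
  have : BorelSpace T := ⟨rfl⟩
  exact (hc.isClosed_interval x y).measurableSet

end IsAlgTree

noncomputable def treePseudoDist [MeasurableSpace T] (c : T → T → T → T) (ν : Measure T)
    (x y : T) : ℝ :=
  ν.real (interval c x y) - ν.real {x} / 2 - ν.real {y} / 2

namespace IsAlgTree

variable {c : T → T → T → T} (hc : IsAlgTree c) [MeasurableSpace T] (ν : Measure T)
include hc

theorem treePseudoDist_self (x : T) : treePseudoDist c ν x x = 0 := by
  rw [treePseudoDist, hc.interval_self]
  ring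

theorem treePseudoDist_comm (x y : T) : treePseudoDist c ν x y = treePseudoDist c ν y x := by
  rw [treePseudoDist, treePseudoDist, hc.interval_comm]
  ring

variable {ν} (hmeas : ∀ x y, MeasurableSet (interval c x y))
  (hfin : ∀ x y, ν (interval c x y) ≠ ∞)
include hmeas hfin

theorem measureReal_interval_add_measureReal_interval (x y z : T) :
    ν.real (interval c x y) + ν.real (interval c y z) + ν.real {c x y z} =
      ν.real (interval c x z) + 2 * ν.real (interval c (c x y z) y) := by
  have h₁ := measureReal_union_add_inter (μ := ν) (s := interval c x y) (hmeas y z)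
    (hfin x y) (hfin y z)
  have h₂ := measureReal_union_add_inter (μ := ν) (s := interval c x z) (hmeas (c x y z) y)
    (hfin x z) (hfin _ y)
  rw [hc.interval_inter_interval, hc.interval_union_interval] at h₁
  rw [hc.interval_inter_branch_interval] at h₂
  linarith

theorem treePseudoDist_add_treePseudoDist (x y z : T) :
    treePseudoDist c ν x y + treePseudoDist c ν y z =
      treePseudoDist c ν x z + 2 * treePseudoDist c ν (c x y z) y := by
  have := hc.measureReal_interval_add_measureReal_interval hmeas hfin x y z
  simp only [treePseudoDist]
  linarith

theorem treePseudoDist_nonneg (x y : T) : 0 ≤ treePseudoDist c ν x y := by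
  rcases eq_or_ne x y with rfl | hxy
  · rw [hc.treePseudoDist_self]
  have hsingle (a : T) : MeasurableSet {a} ∧ ν {a} ≠ ∞ := by
    rw [← hc.interval_self]
    exact ⟨hmeas a a, hfin a a⟩
  have hle : ν.real {x} + ν.real {y} ≤ ν.real (interval c x y) := by
    rw [← measureReal_union (disjoint_singleton.2 hxy) (hsingle y).1 (hsingle x).2 (hsingle y).2]
    refine measureReal_mono (union_subset ?_ ?_) (hfin x y)
    · exact singleton_subset_iff.2 (hc.left_mem_interval x y)
    · exact singleton_subset_iff.2 (hc.right_mem_interval x y)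
  have := measureReal_nonneg (μ := ν) (s := {x})
  have := measureReal_nonneg (μ := ν) (s := {y})
  rw [treePseudoDist]
  linarith

theorem treePseudoDist_triangle (x y z : T) :
    treePseudoDist c ν x z ≤ treePseudoDist c ν x y + treePseudoDist c ν y z := by
  rw [hc.treePseudoDist_add_treePseudoDist hmeas hfin]
  linarith [hc.treePseudoDist_nonneg hmeas hfin (c x y z) y]

end IsAlgTree

theorem stmt_19_general (c : T → T → T → T) (hc : IsAlgTree c)
    (ν : @MeasureTheory.Measure T (@borel T (componentTopology c)))
    (hfin : ∀ x y : T, ν (interval c x y) < ⊤) :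
    let r : T → T → ℝ := fun x y =>
      (ν (interval c x y)).toReal - (ν {x}).toReal / 2 - (ν {y}).toReal / 2
    (∀ x, r x x = 0) ∧ (∀ x y, r x y = r y x) ∧
    (∀ x y z, r x z ≤ r x y + r y z) ∧
    (∀ x y z, r x y + r y z = r x z + 2 * r (c x y z) y) := by
  let : MeasurableSpace T := @borel T (componentTopology c)
  have hfin' x y : ν (interval c x y) ≠ ⊤ := (hfin x y).ne
  exact ⟨hc.treePseudoDist_self ν, hc.treePseudoDist_comm ν,
    hc.treePseudoDist_triangle hc.measurableSet_interval hfin',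
    hc.treePseudoDist_add_treePseudoDist hc.measurableSet_interval hfin'⟩

theorem stmt_19 [Nonempty T] (c : T → T → T → T) (hc : IsAlgTree c)
    (ν : @MeasureTheory.Measure T (@borel T (componentTopology c)))
    (hfin : ∀ x y : T, ν (interval c x y) < ⊤) :
    let r : T → T → ℝ := fun x y =>
      (ν (interval c x y)).toReal - (ν {x}).toReal / 2 - (ν {y}).toReal / 2
    (∀ x, r x x = 0) ∧ (∀ x y, r x y = r y x) ∧
    (∀ x y z, r x z ≤ r x y + r y z) ∧
    (∀ x y z, r x y + r y z = r x z + 2 * r (c x y z) y) :=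
  stmt_19_general c hc ν hfin
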